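/- arXiv:2107.00435 — 3 statements merged into one kernel-verified Lean document; each statement's English description precedes it below -/
import Mathlib

section
/- Let A be an n×n complex matrix and let ℓ be a natural number with ℓ > 1. Then there exists a function Q from ℂ to n×n complex matrices such that: (i) for every z ∈ ℂ for which A − z·Iₙ is invertible, Q(z)^ℓ = A − z·Iₙ; and (ii) for all real z₁, z₂ for which A − z₁·Iₙ and A − z₂·Iₙ are invertible, Q(z₁)Q(z₂) = Q(z₂)Q(z₁). -/
/-!
All the roots are taken in the commutative algebra `ℂ[A]`, so they commute. In a commutative
algebra over an algebraically closed field, an integral unit `u` has an `ℓ`-th root: a polynomial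
`q` interpolating `ℓ`-th roots of the roots of the minimal polynomial of `u` makes `q(u)^ℓ - u`
nilpotent, and Newton's iteration for `X^ℓ - u`, whose derivative `ℓ X^(ℓ-1)` is a unit at
`q(u)`, corrects `q(u)` to an exact root.
-/

open Polynomial

theorem exists_pow_eq_of_isNilpotent_pow_sub {S : Type*} [CommRing S] {ℓ : ℕ}
    (hℓ : IsUnit (ℓ : S)) {u x : S} (hu : IsUnit u) (hx : IsNilpotent (x ^ ℓ - u)) :
    ∃ r : S, r ^ ℓ = u := by
  have hx_unit : IsUnit x := by
    rcases eq_or_ne ℓ 0 with rfl | hℓ0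
    · have : Subsingleton S :=
        subsingleton_of_zero_eq_one (isUnit_zero_iff.mp (by simpa using hℓ))
      exact isUnit_of_subsingleton x
    · refine (isUnit_pow_iff hℓ0).mp ?_
      simpa using hx.isUnit_add_left_of_commute hu (Commute.all _ _)
  obtain ⟨r, ⟨-, hr⟩, -⟩ := existsUnique_nilpotent_sub_and_aeval_eq_zero (P := X ^ ℓ - C u)
    (x := x) (by simpa using hx) (by simpa [derivative_X_pow] using hℓ.mul (hx_unit.pow (ℓ - 1)))
  exact ⟨r, by simpa [sub_eq_zero] using hr⟩

theorem isNilpotent_aeval_of_forall_isRoot {K S : Type*} [Field K] [IsAlgClosed K] [Ring S]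
    [Algebra K S] {u : S} (hu : IsIntegral K u) {f : K[X]}
    (hf : ∀ a ∈ (minpoly K u).roots, f.IsRoot a) : IsNilpotent (aeval u f) := by
  refine ⟨Multiset.card (minpoly K u).roots, ?_⟩
  rw [← map_pow]
  refine aeval_eq_zero_of_dvd_aeval_eq_zero ?_ (minpoly.aeval K u)
  calc minpoly K u = ((minpoly K u).roots.map fun a => X - C a).prod :=
        (IsAlgClosed.splits _).eq_prod_roots_of_monic (minpoly.monic hu)
    _ ∣ ((minpoly K u).roots.map fun _ => f).prod :=
        Multiset.prod_dvd_prod_of_dvd _ _ fun a ha => dvd_iff_isRoot.mpr (hf a ha)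
    _ = f ^ Multiset.card (minpoly K u).roots := by simp

theorem exists_pow_eq_of_isUnit_of_isIntegral {K S : Type*} [Field K] [IsAlgClosed K]
    [CommRing S] [Algebra K S] {ℓ : ℕ} (hℓ : (ℓ : K) ≠ 0) {u : S} (hint : IsIntegral K u)
    (hu : IsUnit u) : ∃ r : S, r ^ ℓ = u := by
  classical
  have hℓ0 : 0 < ℓ := Nat.pos_of_ne_zero (by rintro rfl; simp at hℓ)
  choose ρ hρ using fun a : K => IsAlgClosed.exists_pow_nat_eq a hℓ0
  set q := Lagrange.interpolate (minpoly K u).roots.toFinset id ρ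
  have hq : ∀ a ∈ (minpoly K u).roots, (q ^ ℓ - X).IsRoot a := fun a ha => by
    have hqa : q.eval a = ρ a :=
      Lagrange.eval_interpolate_at_node ρ (Set.injOn_id _) (Multiset.mem_toFinset.mpr ha)
    rw [IsRoot, eval_sub, eval_pow, eval_X, hqa, hρ, sub_self]
  refine exists_pow_eq_of_isNilpotent_pow_sub (x := aeval u q) ?_ hu ?_
  · simpa using (isUnit_iff_ne_zero.mpr hℓ).map (algebraMap K S)
  · simpa using isNilpotent_aeval_of_forall_isRoot hint hq

theorem Subalgebra.isUnit_of_isUnit_coe {R A : Type*} [CommRing R] [IsArtinianRing R] [Ring A]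
    [Algebra R A] {S : Subalgebra R A} {x : S} (hint : IsIntegral R x) (hx : IsUnit (x : A)) :
    IsUnit x :=
  IsArtinianRing.isUnit_of_isIntegral_of_nonZeroDivisor hint
    (comap_nonZeroDivisors_le_of_injective (f := S.val) Subtype.val_injective
      hx.mem_nonZeroDivisors)

/-- Corollary of Section 2. For any `n × n` complex matrix `A` and any
`ℓ > 1`, there is a family `Q : ℂ → ℂ^{n×n}` such that `Q(z)^ℓ = A - z Iₙ` whenever
`A - z Iₙ` is invertible, and `Q(z₁) Q(z₂) = Q(z₂) Q(z₁)` for all real `z₁, z₂` with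
`A - z₁ Iₙ`, `A - z₂ Iₙ` invertible. -/
theorem commuting_family_of_roots {n : ℕ} (A : Matrix (Fin n) (Fin n) ℂ)
    (ℓ : ℕ) (hℓ : 1 < ℓ) :
    ∃ Q : ℂ → Matrix (Fin n) (Fin n) ℂ,
      (∀ z : ℂ, IsUnit (A - z • (1 : Matrix (Fin n) (Fin n) ℂ)) →
        (Q z) ^ ℓ = A - z • (1 : Matrix (Fin n) (Fin n) ℂ)) ∧
      (∀ z₁ z₂ : ℝ, IsUnit (A - (z₁ : ℂ) • (1 : Matrix (Fin n) (Fin n) ℂ)) →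
        IsUnit (A - (z₂ : ℂ) • (1 : Matrix (Fin n) (Fin n) ℂ)) →
        Q (z₁ : ℂ) * Q (z₂ : ℂ) = Q (z₂ : ℂ) * Q (z₁ : ℂ)) := by
  classical
  let S := Algebra.adjoin ℂ {A}
  have hmem (z : ℂ) : A - z • 1 ∈ S :=
    sub_mem (Algebra.self_mem_adjoin_singleton ℂ A) (S.smul_mem S.one_mem z)
  have hroot (z : ℂ) (hz : IsUnit (A - z • 1)) : ∃ r : S, r ^ ℓ = ⟨A - z • 1, hmem z⟩ :=
    exists_pow_eq_of_isUnit_of_isIntegral (K := ℂ) (Nat.cast_ne_zero.mpr (by omega))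
      (Algebra.IsIntegral.isIntegral _)
      (Subalgebra.isUnit_of_isUnit_coe (Algebra.IsIntegral.isIntegral _) hz)
  choose r hr using hroot
  refine ⟨fun z => if hz : IsUnit (A - z • 1) then (r z hz : Matrix (Fin n) (Fin n) ℂ) else 0,
    fun z hz => ?_, fun z₁ z₂ h₁ h₂ => ?_⟩
  · simp only [dif_pos hz, ← SubmonoidClass.coe_pow, hr]
  · simp only [dif_pos h₁, dif_pos h₂, ← Subalgebra.coe_mul, mul_comm]
end

section
/- Let p, n ∈ ℕ with p ≥ 1, set m₁ = m₂ = p, m = 2p, j = diag(I_p, −I_p). Let β₁, β₂ ∈ ℂ^{p×2p} satisfy β₁·j·β₁* = 0, β₂·j·β₂* = 0, and β₁·j·β₂* = I_p. Let c₁ ≠ c₂ be real numbers and A ∈ ℂ^{n×n} with A − c₁Iₙ and A − c₂Iₙ invertible. Let Q ∈ ℂ^{n×n} satisfy Q² = (A − c₁Iₙ)⁻¹·(A − c₂Iₙ)⁻¹, and let h₁, h₂ ∈ ℂ^{n×p}. Define Φ₁(x) := e^{ixQ}h₁ + e^{−ixQ}h₂, Φ₂(x) := −(A − c₂Iₙ)·Q·(e^{ixQ}h₁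 − e^{−ixQ}h₂), and Π(x) := [Φ₁(x) Φ₂(x)]·[β₂ ; β₁] (the n×2p matrix [Φ₁ Φ₂] times the 2p×2p matrix obtained by stacking β₂ above β₁). Then Π is differentiable and Π′(x) = −i·Σ_{k=1}^{2} (A − cₖIₙ)⁻¹·Π(x)·j·Hₖ for all x ∈ ℝ, where Hₖ := βₖ*·βₖ. -/
/-!
Write `E(x) = e^{ixQ}`, `F(x) = e^{-ixQ}` and `Aₖ = A - cₖIₙ`. Since `Q` commutes with `E` and `F`,
`Φ₁' = iQ(Eh₁ - Fh₂) = -i A₂⁻¹ Φ₂` and `Φ₂' = -i A₂ Q² Φ₁ = -i A₁⁻¹ Φ₁`, the last step because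
`A₁` and `A₂` commute. On the other side `Π = Φ₁β₂ + Φ₂β₁`, and the relations `βₖ j βₖ* = 0`,
`β₁ j β₂* = β₂ j β₁* = I` give `Π j H₁ = Φ₁β₁` and `Π j H₂ = Φ₂β₂`, so both sides equal
`-i (A₂⁻¹Φ₂β₂ + A₁⁻¹Φ₁β₁)`.
-/

open Matrix

attribute [local instance] Matrix.normedAddCommGroup Matrix.normedSpace

/-- The signature matrix `j = diag(I_{m₁}, −I_{m₂})`. -/
def Jmat (m₁ m₂ : ℕ) : Matrix (Fin m₁ ⊕ Fin m₂) (Fin m₁ ⊕ Fin m₂) ℂ :=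
  Matrix.fromBlocks 1 0 0 (-1)

open NormedSpace

theorem Jmat_conjTranspose (m₁ m₂ : ℕ) : (Jmat m₁ m₂)ᴴ = Jmat m₁ m₂ := by
  simp [Jmat, fromBlocks_conjTranspose]

theorem add_mul_pairing_eq {α l m r s : Type*} [Fintype m] [Fintype r] [DecidableEq r]
    [Semiring α]
    (Φ Ψ : Matrix l r α) {β γ : Matrix r m α} {J : Matrix m m α} {δ : Matrix m r α}
    (hβ : β * J * δ = 1) (hγ : γ * J * δ = 0) (ε : Matrix r s α) :
    (Φ * β + Ψ * γ) * (J * (δ * ε)) = Φ * ε := by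
  have key : ∀ M : Matrix r m α, M * (J * (δ * ε)) = M * J * δ * ε := by
    intro M; simp only [Matrix.mul_assoc]
  rw [Matrix.add_mul, Matrix.mul_assoc Φ, Matrix.mul_assoc Ψ, key, key, hβ, hγ]
  simp

theorem commute_sub_smul_one {R A : Type*} [CommRing R] [Ring A] [Algebra R A] (M : A) (a b : R) :
    Commute (M - a • 1) (M - b • 1) :=
  ((Commute.refl M).sub_right ((Commute.one_right M).smul_right b)).sub_left
    ((Commute.one_left _).smul_left a)

section Calculus

variable {l m o : Type*} [Fintype l] [Fintype m] [Fintype o] {x : ℝ}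

theorem HasDerivAt.matrix_mul_const {f : ℝ → Matrix l m ℂ} {f' : Matrix l m ℂ}
    (hf : HasDerivAt f f' x) (N : Matrix m o ℂ) : HasDerivAt (fun y => f y * N) (f' * N) x :=
  let L : Matrix l m ℂ →ₗ[ℝ] Matrix l o ℂ :=
    { toFun := (· * N), map_add' := (Matrix.add_mul · · N), map_smul' := (Matrix.smul_mul · · N) }
  L.toContinuousLinearMap.hasFDerivAt.comp_hasDerivAt (f := f) x hf

theorem HasDerivAt.matrix_const_mul {f : ℝ → Matrix m o ℂ} {f' : Matrix m o ℂ}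
    (M : Matrix l m ℂ) (hf : HasDerivAt f f' x) : HasDerivAt (fun y => M * f y) (M * f') x :=
  let L : Matrix m o ℂ →ₗ[ℝ] Matrix l o ℂ :=
    { toFun := (M * ·), map_add' := Matrix.mul_add M, map_smul' := (Matrix.mul_smul M · ·) }
  L.toContinuousLinearMap.hasFDerivAt.comp_hasDerivAt (f := f) x hf

variable [DecidableEq m]

theorem hasDerivAt_matrix_exp_smul (B : Matrix m m ℂ) (x : ℝ) :
    HasDerivAt (fun u : ℝ => exp (u • B)) (B * exp (x • B)) x := by
  -- `exp` is differentiable for the submultiplicative operator norm; entries do not see the norm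
  have entry (i j : m) : HasDerivAt (fun u : ℝ => exp (u • B) i j) ((B * exp (x • B)) i j) x := by
    let _ : NormedAddCommGroup (Matrix m m ℂ) := Matrix.linftyOpNormedAddCommGroup
    let _ : NormedRing (Matrix m m ℂ) := Matrix.linftyOpNormedRing
    let _ : NormedAlgebra ℝ (Matrix m m ℂ) := Matrix.linftyOpNormedAlgebra
    exact (entryLinearMap ℝ ℂ i j).toContinuousLinearMap.hasFDerivAt.comp_hasDerivAt
      (f := fun u : ℝ => exp (u • B)) x (hasDerivAt_exp_smul_const' (𝕂 := ℝ) B x)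
  exact hasDerivAt_pi.2 fun i => hasDerivAt_pi.2 (entry i)

end Calculus

section Solution

variable {l m r o : Type*} [Fintype l] [Fintype m] [Fintype r] [Fintype o]

theorem hasDerivAt_exp_I_mul_smul [DecidableEq l] (Q : Matrix l l ℂ) (x : ℝ) :
    HasDerivAt (fun u : ℝ => exp ((Complex.I * u) • Q))
      (Complex.I • (Q * exp ((Complex.I * x) • Q))) x := by
  have hsmul (u : ℝ) : (Complex.I * u) • Q = u • (Complex.I • Q) := by
    rw [mul_comm, ← smul_smul, Complex.coe_smul]
  simp only [hsmul]
  simpa only [Matrix.smul_mul] using hasDerivAt_matrix_exp_smul (Complex.I • Q) x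

theorem hasDerivAt_exp_neg_I_mul_smul [DecidableEq l] (Q : Matrix l l ℂ) (x : ℝ) :
    HasDerivAt (fun u : ℝ => exp (-((Complex.I * u) • Q)))
      (-(Complex.I • (Q * exp (-((Complex.I * x) • Q))))) x := by
  simpa only [smul_neg, Matrix.neg_mul] using hasDerivAt_exp_I_mul_smul (-Q) x

theorem hasDerivAt_exp_mul_add_exp_neg_mul [DecidableEq l] (Q : Matrix l l ℂ) (h₁ h₂ : Matrix l o ℂ)
    (x : ℝ) :
    HasDerivAt (fun u : ℝ => exp ((Complex.I * u) • Q) * h₁ + exp (-((Complex.I * u) • Q)) * h₂)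
      (Complex.I • (Q * (exp ((Complex.I * x) • Q) * h₁ - exp (-((Complex.I * x) • Q)) * h₂)))
      x := by
  refine (((hasDerivAt_exp_I_mul_smul Q x).matrix_mul_const h₁).add
    ((hasDerivAt_exp_neg_I_mul_smul Q x).matrix_mul_const h₂)).congr_deriv ?_
  simp only [Matrix.smul_mul, Matrix.neg_mul, Matrix.mul_assoc, Matrix.mul_sub, smul_sub,
    ← sub_eq_add_neg]

theorem hasDerivAt_exp_mul_sub_exp_neg_mul [DecidableEq l] (Q : Matrix l l ℂ) (h₁ h₂ : Matrix l o ℂ)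
    (x : ℝ) :
    HasDerivAt (fun u : ℝ => exp ((Complex.I * u) • Q) * h₁ - exp (-((Complex.I * u) • Q)) * h₂)
      (Complex.I • (Q * (exp ((Complex.I * x) • Q) * h₁ + exp (-((Complex.I * x) • Q)) * h₂)))
      x := by
  refine (((hasDerivAt_exp_I_mul_smul Q x).matrix_mul_const h₁).sub
    ((hasDerivAt_exp_neg_I_mul_smul Q x).matrix_mul_const h₂)).congr_deriv ?_
  simp only [Matrix.smul_mul, Matrix.neg_mul, Matrix.mul_assoc, Matrix.mul_add, smul_add,
    sub_neg_eq_add]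

theorem hasDerivAt_fromCols_mul_fromRows {Φ₁ Φ₂ : ℝ → Matrix l r ℂ} {Φ₁' Φ₂' : Matrix l r ℂ}
    {x : ℝ} (hΦ₁ : HasDerivAt Φ₁ Φ₁' x) (hΦ₂ : HasDerivAt Φ₂ Φ₂' x) (β₂ β₁ : Matrix r m ℂ) :
    HasDerivAt (fun y => fromCols (Φ₁ y) (Φ₂ y) * fromRows β₂ β₁) (Φ₁' * β₂ + Φ₂' * β₁) x := by
  simp only [fromCols_mul_fromRows]
  exact (hΦ₁.matrix_mul_const β₂).add (hΦ₂.matrix_mul_const β₁)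

theorem hasDerivAt_fromCols_mul_fromRows_of_pairing [DecidableEq r] {J : Matrix m m ℂ}
    {β₁ β₂ : Matrix r m ℂ}
    (h11 : β₁ * J * β₁ᴴ = 0) (h22 : β₂ * J * β₂ᴴ = 0) (h12 : β₁ * J * β₂ᴴ = 1)
    (h21 : β₂ * J * β₁ᴴ = 1) {M₁ M₂ : Matrix l l ℂ} {Φ₁ Φ₂ : ℝ → Matrix l r ℂ} {x : ℝ}
    (hΦ₁ : HasDerivAt Φ₁ (-(Complex.I • (M₂ * Φ₂ x))) x)
    (hΦ₂ : HasDerivAt Φ₂ (-(Complex.I • (M₁ * Φ₁ x))) x) :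
    HasDerivAt (fun y => fromCols (Φ₁ y) (Φ₂ y) * fromRows β₂ β₁)
      (-(Complex.I • (M₁ * (fromCols (Φ₁ x) (Φ₂ x) * fromRows β₂ β₁) * (J * (β₁ᴴ * β₁)) +
        M₂ * (fromCols (Φ₁ x) (Φ₂ x) * fromRows β₂ β₁) * (J * (β₂ᴴ * β₂))))) x := by
  refine (hasDerivAt_fromCols_mul_fromRows hΦ₁ hΦ₂ β₂ β₁).congr_deriv ?_
  rw [fromCols_mul_fromRows, Matrix.mul_assoc M₁, Matrix.mul_assoc M₂,
    add_mul_pairing_eq _ _ h21 h11, add_comm (Φ₁ x * β₂), add_mul_pairing_eq _ _ h12 h22]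
  simp only [Matrix.neg_mul, Matrix.smul_mul, Matrix.mul_assoc, smul_add, neg_add, add_comm]

end Solution

theorem explicit_generalised_eigenfunction_general {p n : ℕ}
    (β₁ β₂ : Matrix (Fin p) (Fin p ⊕ Fin p) ℂ)
    (h11 : β₁ * Jmat p p * β₁ᴴ = 0) (h22 : β₂ * Jmat p p * β₂ᴴ = 0)
    (h12 : β₁ * Jmat p p * β₂ᴴ = 1)
    (c₁ c₂ : ℝ)
    (A : Matrix (Fin n) (Fin n) ℂ)
    (hA2 : IsUnit (A - (c₂ : ℂ) • (1 : Matrix (Fin n) (Fin n) ℂ)))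
    (Q : Matrix (Fin n) (Fin n) ℂ)
    (hQ : Q ^ 2 = (A - (c₁ : ℂ) • 1)⁻¹ * (A - (c₂ : ℂ) • 1)⁻¹)
    (h₁ h₂ : Matrix (Fin n) (Fin p) ℂ) :
    let Φ₁ : ℝ → Matrix (Fin n) (Fin p) ℂ := fun x =>
      NormedSpace.exp ((Complex.I * (x : ℂ)) • Q) * h₁ +
        NormedSpace.exp (-((Complex.I * (x : ℂ)) • Q)) * h₂
    let Φ₂ : ℝ → Matrix (Fin n) (Fin p) ℂ := fun x =>
      -((A - (c₂ : ℂ) • 1) * Q *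
        (NormedSpace.exp ((Complex.I * (x : ℂ)) • Q) * h₁ -
          NormedSpace.exp (-((Complex.I * (x : ℂ)) • Q)) * h₂))
    let P : ℝ → Matrix (Fin n) (Fin p ⊕ Fin p) ℂ := fun x =>
      fromCols (Φ₁ x) (Φ₂ x) * fromRows β₂ β₁
    ∀ x : ℝ, HasDerivAt P
      (-(Complex.I •
        ((A - (c₁ : ℂ) • 1)⁻¹ * P x * (Jmat p p * (β₁ᴴ * β₁)) +
          (A - (c₂ : ℂ) • 1)⁻¹ * P x * (Jmat p p * (β₂ᴴ * β₂))))) x := by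
  intro Φ₁ Φ₂ P x
  have h21 : β₂ * Jmat p p * β₁ᴴ = 1 := by
    simpa [Matrix.mul_assoc, Jmat_conjTranspose] using congrArg conjTranspose h12
  have hA₂ : IsUnit (A - (c₂ : ℂ) • 1).det := (isUnit_iff_isUnit_det _).mp hA2
  have hQ' : (A - (c₂ : ℂ) • 1) * Q ^ 2 = (A - (c₁ : ℂ) • 1)⁻¹ := by
    rw [hQ, ← Matrix.mul_inv_rev, (commute_sub_smul_one A _ _).eq, Matrix.mul_inv_rev,
      mul_nonsing_inv_cancel_left _ _ hA₂]
  refine hasDerivAt_fromCols_mul_fromRows_of_pairing h11 h22 h12 h21 ?_ ?_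
  · refine (hasDerivAt_exp_mul_add_exp_neg_mul Q h₁ h₂ x).congr_deriv ?_
    simp only [Φ₂, Matrix.mul_neg, Matrix.mul_assoc, nonsing_inv_mul_cancel_left _ _ hA₂, smul_neg,
      neg_neg]
  · refine (((hasDerivAt_exp_mul_sub_exp_neg_mul Q h₁ h₂ x).matrix_const_mul _).neg).congr_deriv ?_
    rw [← hQ', pow_two]
    simp only [Φ₁, Matrix.mul_smul, Matrix.mul_assoc]

/-- Proposition 3.5. For `r = 2`, `m₁ = m₂ = p`, constant `β₁, β₂` with
`βₖ j βₖ* = 0` and `β₁ j β₂* = I_p`, and `Q² = (A − c₁Iₙ)⁻¹(A − c₂Iₙ)⁻¹`, the matrix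
function `Π(x) = [Φ₁(x) Φ₂(x)]·[β₂ ; β₁]`, with
`Φ₁(x) = e^{ixQ}h₁ + e^{−ixQ}h₂` and `Φ₂(x) = −(A − c₂Iₙ) Q (e^{ixQ}h₁ − e^{−ixQ}h₂)`,
solves `Π′(x) = −i Σ_{k=1}^{2} (A − cₖIₙ)⁻¹ Π(x) j Hₖ`, where `Hₖ = βₖ* βₖ`. -/
theorem explicit_generalised_eigenfunction {p n : ℕ} (hp : 1 ≤ p)
    (β₁ β₂ : Matrix (Fin p) (Fin p ⊕ Fin p) ℂ)
    (h11 : β₁ * Jmat p p * β₁ᴴ = 0) (h22 : β₂ * Jmat p p * β₂ᴴ = 0)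
    (h12 : β₁ * Jmat p p * β₂ᴴ = 1)
    (c₁ c₂ : ℝ) (hc : c₁ ≠ c₂)
    (A : Matrix (Fin n) (Fin n) ℂ)
    (hA1 : IsUnit (A - (c₁ : ℂ) • (1 : Matrix (Fin n) (Fin n) ℂ)))
    (hA2 : IsUnit (A - (c₂ : ℂ) • (1 : Matrix (Fin n) (Fin n) ℂ)))
    (Q : Matrix (Fin n) (Fin n) ℂ)
    (hQ : Q ^ 2 = (A - (c₁ : ℂ) • 1)⁻¹ * (A - (c₂ : ℂ) • 1)⁻¹)
    (h₁ h₂ : Matrix (Fin n) (Fin p) ℂ) :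
    let Φ₁ : ℝ → Matrix (Fin n) (Fin p) ℂ := fun x =>
      NormedSpace.exp ((Complex.I * (x : ℂ)) • Q) * h₁ +
        NormedSpace.exp (-((Complex.I * (x : ℂ)) • Q)) * h₂
    let Φ₂ : ℝ → Matrix (Fin n) (Fin p) ℂ := fun x =>
      -((A - (c₂ : ℂ) • 1) * Q *
        (NormedSpace.exp ((Complex.I * (x : ℂ)) • Q) * h₁ -
          NormedSpace.exp (-((Complex.I * (x : ℂ)) • Q)) * h₂))
    let P : ℝ → Matrix (Fin n) (Fin p ⊕ Fin p) ℂ := fun x =>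
      fromCols (Φ₁ x) (Φ₂ x) * fromRows β₂ β₁
    ∀ x : ℝ, HasDerivAt P
      (-(Complex.I •
        ((A - (c₁ : ℂ) • 1)⁻¹ * P x * (Jmat p p * (β₁ᴴ * β₁)) +
          (A - (c₂ : ℂ) • 1)⁻¹ * P x * (Jmat p p * (β₂ᴴ * β₂))))) x :=
  explicit_generalised_eigenfunction_general β₁ β₂ h11 h22 h12 c₁ c₂ A hA2 Q hQ h₁ h₂
end

section
/- Let m₁, m₂ ∈ ℕ with m = m₁ + m₂ > 0, let j = diag(I_{m₁}, −I_{m₂}) ∈ ℂ^{m×m}, let C ∈ ℂ^{m×m} be positive definite (Hermitian with positive eigenvalues) and satisfy C·j·C = j, and let ℓ ∈ ℕ with ℓ ≥ 1. Then there exists a unique positive definite matrix D ∈ ℂ^{m×m} with D^ℓ = C, and this D satisfies D·j·D = j. -/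
open Matrix
open scoped ComplexOrder

/-!
`D := C ^ (1/ℓ)` is the positive `ℓ`-th root given by the continuous functional calculus, and
positive roots are unique because `(A ^ ℓ) ^ (1/ℓ) = A` for every `A ≥ 0`. Since `j` is a
Hermitian involution, `C j C = j` says `j C j = C⁻¹`. Conjugation by `j` preserves positivity and
commutes with powers, so `j D j` and `D⁻¹` are both positive `ℓ`-th roots of `C⁻¹`; hence they
coincide, which is `D j D = j`.
-/

open scoped MatrixOrder

namespace CFC

variable {A : Type*} [PartialOrder A] [Ring A] [StarRing A] [TopologicalSpace A]
  [StarOrderedRing A] [Algebra ℝ A] [ContinuousFunctionalCalculus ℝ A IsSelfAdjoint]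
  [NonnegSpectrumClass ℝ A] [IsSemitopologicalRing A] [T2Space A]

lemma pow_rpow_inv_natCast (a : A) {ℓ : ℕ} (hℓ : ℓ ≠ 0) (ha : 0 ≤ a := by cfc_tac) :
    (a ^ ℓ) ^ ((ℓ : ℝ)⁻¹) = a := by
  rw [← rpow_natCast a ℓ, rpow_rpow_of_exponent_nonneg a _ _ (by positivity) (by positivity),
    mul_inv_cancel₀ (by exact_mod_cast hℓ), rpow_one a]

lemma rpow_inv_natCast_pow (a : A) {ℓ : ℕ} (hℓ : ℓ ≠ 0) (ha : 0 ≤ a := by cfc_tac) :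
    (a ^ ((ℓ : ℝ)⁻¹)) ^ ℓ = a := by
  rw [← rpow_natCast _ ℓ, rpow_rpow_of_exponent_nonneg a _ _ (by positivity) (by positivity),
    inv_mul_cancel₀ (by exact_mod_cast hℓ), rpow_one a]

lemma pow_left_inj₀ {a b : A} {ℓ : ℕ} (ha : 0 ≤ a) (hb : 0 ≤ b) (hℓ : ℓ ≠ 0) :
    a ^ ℓ = b ^ ℓ ↔ a = b :=
  ⟨fun h => by rw [← pow_rpow_inv_natCast a hℓ, h, pow_rpow_inv_natCast b hℓ], congrArg (· ^ ℓ)⟩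

end CFC

lemma conj_pow_of_mul_self_eq_one {M : Type*} [Monoid M] {j : M} (hj : j * j = 1) (a : M)
    (k : ℕ) : (j * a * j) ^ k = j * a ^ k * j :=
  Units.conj_pow ⟨j, j, hj, hj⟩ a k

namespace Matrix

variable {n : Type*} [Fintype n] [DecidableEq n]

lemma mul_mul_eq_iff_mul_mul_eq_nonsing_inv {R : Type*} [CommRing R] {A J : Matrix n n R}
    (hJ : J * J = 1) (hA : IsUnit A) : A * J * A = J ↔ J * A * J = A⁻¹ := by
  constructor
  · intro h
    refine (inv_eq_left_inv ?_).symm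
    rw [mul_assoc, mul_assoc, ← mul_assoc A, h, hJ]
  · intro h
    calc A * J * A = A * (J * A * J) * J := by rw [mul_assoc, mul_assoc, mul_assoc, hJ, mul_one]
      _ = J := by rw [h, mul_nonsing_inv A ((isUnit_iff_isUnit_det A).mp hA), one_mul]

variable {𝕜 : Type*} [RCLike 𝕜]

lemma PosDef.mul_mul_eq_of_pow_mul_mul_pow_eq {D J : Matrix n n 𝕜} (hD : D.PosDef)
    (hJ : IsSelfAdjoint J) (hJJ : J * J = 1) {ℓ : ℕ} (hℓ : ℓ ≠ 0)
    (h : D ^ ℓ * J * D ^ ℓ = J) : D * J * D = J := by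
  have hJunit : IsUnit J := IsUnit.of_mul_eq_one J hJJ
  have hconj : (J * D * J).PosDef := by
    simpa only [hJ.star_eq] using (IsUnit.posDef_star_left_conjugate_iff hJunit).mpr hD
  have hpow : (J * D * J) ^ ℓ = D⁻¹ ^ ℓ := by
    rw [conj_pow_of_mul_self_eq_one hJJ, inv_pow',
      ← mul_mul_eq_iff_mul_mul_eq_nonsing_inv hJJ (hD.isUnit.pow ℓ), h]
  have hconj_eq : J * D * J = D⁻¹ :=
    (CFC.pow_left_inj₀ hconj.posSemidef.nonneg hD.inv.posSemidef.nonneg hℓ).mp hpow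
  exact (mul_mul_eq_iff_mul_mul_eq_nonsing_inv hJJ hD.isUnit).mpr hconj_eq

end Matrix

lemma Jmat_mul_self (m₁ m₂ : ℕ) : Jmat m₁ m₂ * Jmat m₁ m₂ = 1 := by
  simp [Jmat, fromBlocks_multiply, fromBlocks_one]

lemma isSelfAdjoint_Jmat (m₁ m₂ : ℕ) : IsSelfAdjoint (Jmat m₁ m₂) := by
  simp [IsSelfAdjoint, Jmat, star_eq_conjTranspose, fromBlocks_conjTranspose]

theorem positive_root_j_property_general {m₁ m₂ : ℕ}
    (C : Matrix (Fin m₁ ⊕ Fin m₂) (Fin m₁ ⊕ Fin m₂) ℂ)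
    (hC : C.PosDef) (hCj : C * Jmat m₁ m₂ * C = Jmat m₁ m₂)
    (ℓ : ℕ) (hℓ : 1 ≤ ℓ) :
    ∃ D : Matrix (Fin m₁ ⊕ Fin m₂) (Fin m₁ ⊕ Fin m₂) ℂ,
      D.PosDef ∧ D ^ ℓ = C ∧ D * Jmat m₁ m₂ * D = Jmat m₁ m₂ ∧
      ∀ D' : Matrix (Fin m₁ ⊕ Fin m₂) (Fin m₁ ⊕ Fin m₂) ℂ,
        D'.PosDef → D' ^ ℓ = C → D' = D := by
  have hℓ₀ : ℓ ≠ 0 := Nat.one_le_iff_ne_zero.mp hℓ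
  set D := C ^ ((ℓ : ℝ)⁻¹)
  have hD : D.PosDef := (IsStrictlyPositive.rpow C _ hC.isStrictlyPositive).posDef
  have hDℓ : D ^ ℓ = C := CFC.rpow_inv_natCast_pow C hℓ₀ hC.posSemidef.nonneg
  refine ⟨D, hD, hDℓ, ?_, fun D' hD' hD'ℓ => ?_⟩
  · exact hD.mul_mul_eq_of_pow_mul_mul_pow_eq (isSelfAdjoint_Jmat m₁ m₂) (Jmat_mul_self m₁ m₂)
      hℓ₀ (hDℓ ▸ hCj)
  · exact (CFC.pow_left_inj₀ hD'.posSemidef.nonneg hD.posSemidef.nonneg hℓ₀).mp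
      (hD'ℓ.trans hDℓ.symm)

/-- root assertion of Proposition B.3. If `C > 0` satisfies
`C j C = j` and `ℓ ≥ 1`, then there is a unique positive definite `D` with `D^ℓ = C`,
and this `D` satisfies `D j D = j`. -/
theorem positive_root_j_property {m₁ m₂ : ℕ} (hm : 0 < m₁ + m₂)
    (C : Matrix (Fin m₁ ⊕ Fin m₂) (Fin m₁ ⊕ Fin m₂) ℂ)
    (hC : C.PosDef) (hCj : C * Jmat m₁ m₂ * C = Jmat m₁ m₂)
    (ℓ : ℕ) (hℓ : 1 ≤ ℓ) :
    ∃ D : Matrix (Fin m₁ ⊕ Fin m₂) (Fin m₁ ⊕ Fin m₂) ℂ,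
      D.PosDef ∧ D ^ ℓ = C ∧ D * Jmat m₁ m₂ * D = Jmat m₁ m₂ ∧
      ∀ D' : Matrix (Fin m₁ ⊕ Fin m₂) (Fin m₁ ⊕ Fin m₂) ℂ,
        D'.PosDef → D' ^ ℓ = C → D' = D :=
  positive_root_j_property_general C hC hCj ℓ hℓ
end
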